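/- Let n be a positive integer and p an odd prime. A connected circulant graph Cay(Z_n, S) of degree p (i.e., |S| = p) admits a total perfect code if and only if p divides n and s ≢ s′ (mod p) for all distinct s, s′ ∈ S. -/

import Mathlib

/-!
Because `S = -S`, a total perfect code of `Cay(ℤ_n, S)` is the same as a set `C` such that every
element of `ℤ_n` is uniquely `s + c` with `s ∈ S`, `c ∈ C`. Hence `|S| |C| = n`, so `p ∣ n`, and
for every nontrivial additive character `ψ` of `ℤ_n` one of `∑_{s ∈ S} ψ s`, `∑_{c ∈ C} ψ c`
vanishes. Take `ψ v = ζ ^ v` with `ζ` a primitive `p^(k+1)`-th root of unity, `p^(k+1) ∣ n`.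
Since the `ζ ^ x` with `x < φ(p^(k+1))` are linearly independent over `ℚ`, a vanishing sum
`∑_{t ∈ T} ζ ^ t` means that the number of elements of `T` in a residue class mod `p^(k+1)`
only depends on the class mod `p^k`. For `T = S` and `k = 0` this says that `S` meets every
residue class mod `p` exactly once. For `T = S` and `k ≥ 1` it forces all of `S` into one class
mod `p`, hence, as `S = -S` and `p` is odd, into `pℤ_n`, which contradicts connectivity. For
`T = C` and all `k < v_p(n)` it gives `p^(v_p(n)) ∣ |C| = n / p`, which is absurd. Conversely, if
`S` meets every class mod `p` once, then `pℤ_n` is a total perfect code.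
-/

open Polynomial

/-- The circulant graph `Cay(Z_n, S)`: vertices are `ZMod n`, and `u, v` are adjacent
iff `v - u ∈ S` (here symmetrised; when `S = -S` this agrees with the usual definition). -/
def circulantGraph (n : ℕ) (S : Finset (ZMod n)) : SimpleGraph (ZMod n) :=
  SimpleGraph.fromRel (fun u v => v - u ∈ S)

/-- `C` is a perfect code in `G`: an independent set such that every vertex outside `C`
is adjacent to exactly one vertex of `C`. -/
def IsPerfectCode {V : Type*} (G : SimpleGraph V) (C : Set V) : Prop :=
  (∀ u ∈ C, ∀ v ∈ C, ¬ G.Adj u v) ∧ ∀ v, v ∉ C → ∃! c, c ∈ C ∧ G.Adj v c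

/-- `C` is a total perfect code in `G`: every vertex is adjacent to exactly one vertex of `C`. -/
def IsTotalPerfectCode {V : Type*} (G : SimpleGraph V) (C : Set V) : Prop :=
  ∀ v, ∃! c, c ∈ C ∧ G.Adj v c

open Finset

section VanishingSums

open Nat in
lemma IsPrimitiveRoot.eq_zero_of_sum_range_totient_smul_pow_eq_zero {K : Type*} [Field K]
    [CharZero K] {ζ : K} {N : ℕ} (hζ : IsPrimitiveRoot ζ N) (hN : 0 < N) {b : ℕ → ℚ}
    (h : ∑ x ∈ range (φ N), b x • ζ ^ x = 0) {x : ℕ} (hx : x < φ N) : b x = 0 := by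
  have hdeg : (minpoly ℚ ζ).natDegree = φ N := by
    rw [← Polynomial.cyclotomic_eq_minpoly_rat hζ hN, Polynomial.natDegree_cyclotomic]
  refine Fintype.linearIndependent_iff.1 (linearIndependent_pow ζ) (fun i => b i) ?_
    ⟨x, hdeg ▸ hx⟩
  rw [Fin.sum_univ_eq_sum_range (fun i => b i • ζ ^ i), hdeg]
  exact h

lemma sum_range_mul_smul_pow_mod_eq_zero {K : Type*} [Field K] [CharZero K] {ζ : K} {p d : ℕ}
    (hω : IsPrimitiveRoot (ζ ^ d) p) (hp : 1 < p) (c : ℕ → ℚ) :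
    ∑ x ∈ range (p * d), c (x % d) • ζ ^ x = 0 := by
  have hblocks : ∀ i, ∑ x ∈ range (i * d), c (x % d) • ζ ^ x =
      (∑ r ∈ range d, c r • ζ ^ r) * ∑ j ∈ range i, (ζ ^ d) ^ j := by
    intro i
    induction i with
    | zero => simp
    | succ i ih =>
      rw [Nat.succ_mul, sum_range_add, ih, sum_range_succ, mul_add, sum_mul _ _ ((ζ ^ d) ^ i)]
      congr 1
      refine sum_congr rfl fun r hr => ?_
      rw [Nat.mul_add_mod_of_lt (mem_range.1 hr), smul_mul_assoc, ← pow_mul, ← pow_add]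
      congr 2
      ring
  rw [hblocks, hω.geom_sum_eq_zero hp, mul_zero]

lemma IsPrimitiveRoot.coeff_eq_of_sum_smul_pow_eq_zero {K : Type*} [Field K] [CharZero K]
    {ζ : K} {p k : ℕ} (hp : p.Prime) (hζ : IsPrimitiveRoot ζ (p ^ (k + 1))) {a : ℕ → ℚ}
    (h : ∑ x ∈ range (p ^ (k + 1)), a x • ζ ^ x = 0) {x y : ℕ} (hx : x < p ^ (k + 1))
    (hy : y < p ^ (k + 1)) (hxy : x ≡ y [MOD p ^ k]) : a x = a y := by
  set d := p ^ k
  have hd : 0 < d := pow_pos hp.pos k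
  have hq : p ^ (k + 1) = (p - 1) * d + d := by
    rw [pow_succ, mul_comm, ← Nat.succ_mul, Nat.succ_eq_add_one, Nat.sub_add_cancel hp.pos]
  -- Subtracting the last block times `∑ i < p, ζ ^ (i * d) = 0` leaves a relation among the
  -- `ζ ^ x` with `x < φ (p ^ (k + 1))`, which are linearly independent over `ℚ`.
  let b x := a x - a ((p - 1) * d + x % d)
  have hb : ∑ x ∈ range (p ^ (k + 1)), b x • ζ ^ x = 0 := by
    have hω : IsPrimitiveRoot (ζ ^ d) p := hζ.pow (pow_pos hp.pos _) (pow_succ p k)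
    have := sum_range_mul_smul_pow_mod_eq_zero hω hp.one_lt fun r => a ((p - 1) * d + r)
    rw [← pow_succ'] at this
    simp only [b, sub_smul, sum_sub_distrib, h, this, sub_zero]
  have hb_tail : ∀ r < d, b ((p - 1) * d + r) = 0 := fun r hr => by
    simp [b, Nat.mul_add_mod_of_lt hr]
  have htail : ∑ r ∈ range d, b ((p - 1) * d + r) • ζ ^ ((p - 1) * d + r) = 0 :=
    sum_eq_zero fun r hr => by rw [hb_tail r (mem_range.1 hr), zero_smul]
  rw [hq, sum_range_add, htail, add_zero, mul_comm, ← Nat.totient_prime_pow_succ hp] at hb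
  have key : ∀ z < p ^ (k + 1), a z = a ((p - 1) * d + z % d) := by
    intro z hz
    rcases lt_or_ge z ((p - 1) * d) with hlt | hge
    · refine sub_eq_zero.1
        (hζ.eq_zero_of_sum_range_totient_smul_pow_eq_zero (pow_pos hp.pos _) hb ?_)
      rwa [Nat.totient_prime_pow_succ hp, mul_comm]
    · obtain ⟨r, hr, rfl⟩ : ∃ r < d, z = (p - 1) * d + r := ⟨z - (p - 1) * d, by omega, by omega⟩
      rw [Nat.mul_add_mod_of_lt hr]
  rw [key x hx, key y hy, hxy]

end VanishingSums

section Graph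

variable {n : ℕ} {S : Finset (ZMod n)}

lemma circulantGraph_adj (h0S : (0 : ZMod n) ∉ S) (hSneg : ∀ s ∈ S, -s ∈ S) {u v : ZMod n} :
    (circulantGraph n S).Adj u v ↔ u - v ∈ S := by
  have hsymm : v - u ∈ S ↔ u - v ∈ S :=
    ⟨fun h => neg_sub v u ▸ hSneg _ h, fun h => neg_sub u v ▸ hSneg _ h⟩
  rw [circulantGraph, SimpleGraph.fromRel_adj, hsymm, or_self]
  exact ⟨And.right, fun h => ⟨fun huv => h0S (by rwa [huv, sub_self] at h), h⟩⟩

lemma isTotalPerfectCode_circulantGraph_iff (h0S : (0 : ZMod n) ∉ S) (hSneg : ∀ s ∈ S, -s ∈ S)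
    (C : Set (ZMod n)) :
    IsTotalPerfectCode (circulantGraph n S) C ↔ AddSubgroup.IsComplement (S : Set (ZMod n)) C := by
  simp [AddSubgroup.isComplement_iff_existsUnique_add_neg_mem, IsTotalPerfectCode,
    circulantGraph_adj h0S hSneg, ← sub_eq_add_neg, ExistsUnique, and_comm, and_assoc,
    @imp.swap (_ ∈ S)]

lemma not_connected_circulantGraph (H : AddSubgroup (ZMod n)) (hS : ∀ s ∈ S, s ∈ H)
    (hH : H ≠ ⊤) : ¬ (circulantGraph n S).Connected := by
  refine fun hconn => hH ((AddSubgroup.eq_top_iff' H).2 fun v => ?_)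
  have hadj : ∀ u w, (circulantGraph n S).Adj u w → u ∈ H → w ∈ H := by
    rintro u w ⟨-, h | h⟩ hu
    · simpa using H.add_mem hu (hS _ h)
    · simpa using H.sub_mem hu (hS _ h)
  induction (SimpleGraph.reachable_iff_reflTransGen 0 v).1 (hconn 0 v) with
  | refl => exact H.zero_mem
  | tail _ huw ih => exact hadj _ _ huw ih

end Graph

section ReductionModP

variable {n p : ℕ} (hpn : p ∣ n)

lemma val_modEq_iff_castHom_eq [NeZero n] (a b : ZMod n) :
    a.val ≡ b.val [MOD p] ↔ ZMod.castHom hpn (ZMod p) a = ZMod.castHom hpn (ZMod p) b := by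
  simp only [ZMod.castHom_apply, ZMod.cast_eq_val, ZMod.natCast_eq_natCast_iff]

lemma isComplement_ker_castHom [NeZero p] {S : Finset (ZMod n)}
    (hinj : Set.InjOn (ZMod.castHom hpn (ZMod p)) S) (hcard : #S = p) :
    AddSubgroup.IsComplement (S : Set (ZMod n)) (ZMod.castHom hpn (ZMod p)).toAddMonoidHom.ker := by
  set r := ZMod.castHom hpn (ZMod p)
  have hsurj : S.image r = univ :=
    eq_univ_of_card _ (by rw [card_image_of_injOn hinj, hcard, ZMod.card])
  rw [AddSubgroup.isComplement_iff_existsUnique_neg_add_mem]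
  intro v
  obtain ⟨s, hs, hsv⟩ := mem_image.1 (hsurj ▸ mem_univ (r v))
  refine ⟨⟨s, hs⟩, by simp [hsv], fun t ht => Subtype.ext (hinj t.2 hs ?_)⟩
  simpa [hsv, neg_add_eq_zero] using ht

end ReductionModP

namespace AddSubgroup.IsComplement

variable {G : Type*} [AddGroup G] [Fintype G] {S T : Finset G}

lemma card_mul_card_eq (h : IsComplement (S : Set G) T) : #S * #T = Fintype.card G := by
  simpa [Nat.card_eq_fintype_card] using h.card_mul_card

lemma sum_mul_sum_addChar_eq_zero {R : Type*} [CommRing R] [IsDomain R]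
    (h : IsComplement (S : Set G) T) {ψ : AddChar G R} (hψ : ψ ≠ 1) :
    (∑ s ∈ S, ψ s) * (∑ t ∈ T, ψ t) = 0 := by
  rw [← AddChar.sum_eq_zero_of_ne_one hψ, ← Fintype.sum_bijective _ h _ ψ fun _ => rfl,
    ← sum_coe_sort S, ← sum_coe_sort T, Fintype.sum_mul_sum, Fintype.sum_prod_type]
  simp only [AddChar.map_add_eq_mul]
  rfl

end AddSubgroup.IsComplement

section ResidueCount

variable {n : ℕ} (T : Finset (ZMod n))

def residueCount (q x : ℕ) : ℕ := #{t ∈ T | t.val ≡ x [MOD q]}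

def ResidueCountPeriodic (q d : ℕ) : Prop :=
  ∀ x y, x ≡ y [MOD d] → residueCount T q x = residueCount T q y

variable {T}

lemma residueCount_mod (q x : ℕ) : residueCount T q (x % q) = residueCount T q x :=
  congrArg card (filter_congr fun _ _ =>
    ⟨fun h => h.trans (Nat.mod_modEq x q), fun h => h.trans (Nat.mod_modEq x q).symm⟩)

lemma residueCount_one (x : ℕ) : residueCount T 1 x = #T := by
  simp [residueCount, Nat.modEq_one]

lemma sum_pow_val_eq_sum_residueCount {K : Type*} [CommSemiring K] {q : ℕ} (hq : 0 < q)
    {ζ : K} (hζ : ζ ^ q = 1) :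
    ∑ t ∈ T, ζ ^ t.val = ∑ x ∈ range q, residueCount T q x • ζ ^ x := by
  rw [← sum_fiberwise_of_maps_to (g := fun t : ZMod n => t.val % q)
    (fun t _ => mem_range.2 (Nat.mod_lt _ hq))]
  refine sum_congr rfl fun x hx => ?_
  have hfiber : {t ∈ T | t.val % q = x} = {t ∈ T | t.val ≡ x [MOD q]} := by
    simp [Nat.ModEq, Nat.mod_eq_of_lt (mem_range.1 hx)]
  rw [residueCount, ← hfiber, ← sum_const]
  exact sum_congr rfl fun t ht => by rw [pow_eq_pow_mod _ hζ, (mem_filter.1 ht).2]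

lemma residueCount_eq_div_mul_of_periodic {q d : ℕ} (hq : 0 < q) (hdq : d ∣ q)
    (h : ResidueCountPeriodic T q d) (x : ℕ) :
    residueCount T d x = q / d * residueCount T q x := by
  have hmaps : ∀ t ∈ T.filter (·.val ≡ x [MOD d]), t.val % q ∈ (range q).filter (· ≡ x [MOD d]) :=
    fun t ht => mem_filter.2 ⟨mem_range.2 (Nat.mod_lt _ hq),
      ((Nat.mod_modEq _ _).of_dvd hdq).trans (mem_filter.1 ht).2⟩
  rw [residueCount, card_eq_sum_card_fiberwise hmaps]
  calc ∑ y ∈ (range q).filter (· ≡ x [MOD d]), #{t ∈ T.filter (·.val ≡ x [MOD d]) | t.val % q = y}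
      = ∑ y ∈ (range q).filter (· ≡ x [MOD d]), residueCount T q y := by
        refine sum_congr rfl fun y hy => ?_
        obtain ⟨hyq, hyx⟩ := mem_filter.1 hy
        have hy : y % q = y := Nat.mod_eq_of_lt (mem_range.1 hyq)
        rw [filter_filter, residueCount]
        refine congrArg card (filter_congr fun t _ => ?_)
        simp only [Nat.ModEq, hy]
        exact ⟨And.right, fun hty =>
          ⟨(Nat.ModEq.of_dvd hdq (show t.val ≡ y [MOD q] from hty.trans hy.symm)).trans hyx, hty⟩⟩
    _ = q / d * residueCount T q x := by
        rw [sum_congr rfl fun y hy => h y x (mem_filter.1 hy).2, sum_const, smul_eq_mul,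
          ← Nat.count_eq_card_filter_range, Nat.count_modEq_card _ (Nat.pos_of_dvd_of_pos hdq hq),
          Nat.mod_eq_zero_of_dvd hdq]
        simp

end ResidueCount

section PrimePowerLevels

variable {n p k : ℕ} {T : Finset (ZMod n)}

lemma residueCount_pow_eq_mul (hp : 0 < p) (h : ResidueCountPeriodic T (p ^ (k + 1)) (p ^ k))
    (x : ℕ) : residueCount T (p ^ k) x = p * residueCount T (p ^ (k + 1)) x := by
  rw [residueCount_eq_div_mul_of_periodic (by positivity) (pow_dvd_pow p k.le_succ) h,
    pow_succ, Nat.mul_div_cancel_left _ (by positivity)]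

lemma pow_dvd_card_of_periodic (hp : 0 < p) {m : ℕ}
    (h : ∀ k < m, ResidueCountPeriodic T (p ^ (k + 1)) (p ^ k)) : p ^ m ∣ #T := by
  suffices ∀ j ≤ m, #T = p ^ j * residueCount T (p ^ j) 0 from ⟨_, this m le_rfl⟩
  intro j hj
  induction j with
  | zero => simp [residueCount_one]
  | succ j ih =>
    rw [ih (by omega), residueCount_pow_eq_mul hp (h j hj), pow_succ, mul_assoc]

lemma residueCount_pow_succ_eq_one (hp : 0 < p) (h : ResidueCountPeriodic T (p ^ (k + 1)) (p ^ k))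
    (hT : #T ≤ p) {s : ZMod n} (hs : s ∈ T) : residueCount T (p ^ (k + 1)) s.val = 1 := by
  have hpos : 0 < residueCount T (p ^ (k + 1)) s.val := card_pos.2 ⟨s, mem_filter.2 ⟨hs, rfl⟩⟩
  have hle : p * residueCount T (p ^ (k + 1)) s.val ≤ p * 1 := by
    rw [← residueCount_pow_eq_mul hp h, mul_one]
    exact (card_filter_le _ _).trans hT
  have := Nat.le_of_mul_le_mul_left hle hp
  omega

lemma modEq_of_periodic (hp : 0 < p) (h : ResidueCountPeriodic T (p ^ (k + 1)) (p ^ k))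
    (hT : #T = p) {s t : ZMod n} (hs : s ∈ T) (ht : t ∈ T) : s.val ≡ t.val [MOD p ^ k] := by
  have hall : residueCount T (p ^ k) s.val = #T := by
    rw [residueCount_pow_eq_mul hp h, residueCount_pow_succ_eq_one hp h hT.le hs, mul_one, hT]
  exact (filter_card_eq hall t ht).symm

lemma not_modEq_of_periodic (hp : 0 < p) (h : ResidueCountPeriodic T p 1) (hT : #T ≤ p)
    {s t : ZMod n} (hs : s ∈ T) (ht : t ∈ T) (hst : s ≠ t) : ¬ s.val ≡ t.val [MOD p] := by
  intro hmod
  have hone := residueCount_pow_succ_eq_one (k := 0) hp (by simpa using h) hT hs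
  rw [zero_add, pow_one] at hone
  have : 1 < residueCount T p s.val :=
    one_lt_card.2 ⟨s, mem_filter.2 ⟨hs, rfl⟩, t, mem_filter.2 ⟨ht, hmod.symm⟩, hst⟩
  omega

lemma periodic_of_sum_pow_val_eq_zero {K : Type*} [Field K] [CharZero K] {ζ : K} (hp : p.Prime)
    (hζ : IsPrimitiveRoot ζ (p ^ (k + 1))) {T : Finset (ZMod n)} (h : ∑ t ∈ T, ζ ^ t.val = 0) :
    ResidueCountPeriodic T (p ^ (k + 1)) (p ^ k) := by
  have hq : 0 < p ^ (k + 1) := pow_pos hp.pos _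
  have hdvd : p ^ k ∣ p ^ (k + 1) := pow_dvd_pow p k.le_succ
  rw [sum_pow_val_eq_sum_residueCount hq hζ.pow_eq_one] at h
  simp_rw [← Nat.cast_smul_eq_nsmul ℚ] at h
  intro x y hxy
  rw [← residueCount_mod, ← residueCount_mod (x := y)]
  exact_mod_cast hζ.coeff_eq_of_sum_smul_pow_eq_zero hp h (Nat.mod_lt _ hq) (Nat.mod_lt _ hq)
    (((Nat.mod_modEq x _).of_dvd hdvd).trans (hxy.trans ((Nat.mod_modEq y _).of_dvd hdvd).symm))

lemma periodic_or_periodic_of_isComplement [NeZero n] (hp : p.Prime) (hk : p ^ (k + 1) ∣ n)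
    {S C : Finset (ZMod n)} (h : AddSubgroup.IsComplement (S : Set (ZMod n)) C) :
    ResidueCountPeriodic S (p ^ (k + 1)) (p ^ k) ∨
      ResidueCountPeriodic C (p ^ (k + 1)) (p ^ k) := by
  have hζ := Complex.isPrimitiveRoot_exp (p ^ (k + 1)) (pow_pos hp.pos _).ne'
  have hζn := (hζ.pow_eq_one_iff_dvd n).2 hk
  have hψ : AddChar.zmodChar n hζn ≠ 1 := by
    rw [AddChar.zmod_char_ne_one_iff, ← Nat.cast_one (R := ZMod n), AddChar.zmodChar_apply',
      pow_one]
    exact hζ.ne_one (Nat.one_lt_pow k.succ_ne_zero hp.one_lt)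
  exact (mul_eq_zero.1 (h.sum_mul_sum_addChar_eq_zero hψ)).imp
    (periodic_of_sum_pow_val_eq_zero hp hζ) (periodic_of_sum_pow_val_eq_zero hp hζ)

lemma castHom_eq_zero_of_periodic [NeZero n] (hp : p.Prime) (hodd : Odd p) (hpn : p ∣ n)
    {S : Finset (ZMod n)} (hSneg : ∀ s ∈ S, -s ∈ S) (hcard : #S = p) (hk : k ≠ 0)
    (h : ResidueCountPeriodic S (p ^ (k + 1)) (p ^ k)) {s : ZMod n} (hs : s ∈ S) :
    ZMod.castHom hpn (ZMod p) s = 0 := by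
  have hmod := (modEq_of_periodic hp.pos h hcard (hSneg s hs) hs).of_dvd (dvd_pow_self p hk)
  rw [val_modEq_iff_castHom_eq hpn, map_neg] at hmod
  refine ((ZMod.neg_eq_self_iff _).1 hmod).resolve_right fun h2 => ?_
  rw [Nat.odd_iff] at hodd
  omega

end PrimePowerLevels

lemma not_forall_castHom_eq_zero_of_connected {n p : ℕ} (hpn : p ∣ n) (hp : 1 < p)
    {S : Finset (ZMod n)} (hconn : (circulantGraph n S).Connected) :
    ¬ ∀ s ∈ S, ZMod.castHom hpn (ZMod p) s = 0 := by
  have : Fact (1 < p) := ⟨hp⟩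
  refine fun hS => not_connected_circulantGraph (ZMod.castHom hpn (ZMod p)).toAddMonoidHom.ker
    hS (fun htop => ?_) hconn
  have h1 : (1 : ZMod n) ∈ (ZMod.castHom hpn (ZMod p)).toAddMonoidHom.ker :=
    htop ▸ AddSubgroup.mem_top 1
  exact one_ne_zero ((map_one (ZMod.castHom hpn (ZMod p))).symm.trans h1)

theorem val_not_modEq_of_isComplement {n p : ℕ} [NeZero n] (hp : p.Prime) (hodd : Odd p)
    {S C : Finset (ZMod n)} (h : AddSubgroup.IsComplement (S : Set (ZMod n)) C)
    (hSneg : ∀ s ∈ S, -s ∈ S) (hcard : #S = p) (hpn : p ∣ n)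
    (hS : ¬ ∀ s ∈ S, ZMod.castHom hpn (ZMod p) s = 0) :
    ∀ s ∈ S, ∀ s' ∈ S, s ≠ s' → ¬ s.val ≡ s'.val [MOD p] := by
  by_cases h1 : ResidueCountPeriodic S p 1
  · exact fun s hs s' hs' => not_modEq_of_periodic hp.pos h1 hcard.le hs hs'
  set m := n.factorization p
  have hC : ∀ k < m, ResidueCountPeriodic C (p ^ (k + 1)) (p ^ k) := fun k hk =>
    (periodic_or_periodic_of_isComplement hp
      ((hp.pow_dvd_iff_le_factorization (NeZero.ne n)).2 hk) h).resolve_left fun hSk => by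
    rcases k with _ | k
    · exact h1 (by simpa using hSk)
    · exact hS fun s hs => castHom_eq_zero_of_periodic hp hodd hpn hSneg hcard k.succ_ne_zero hSk hs
  have hn : n = #C * p := by
    rw [← hcard, mul_comm]
    exact (h.card_mul_card_eq.trans (ZMod.card n)).symm
  have hdvd : p ^ (m + 1) ∣ n := by
    rw [pow_succ, hn]
    exact mul_dvd_mul_right (pow_dvd_card_of_periodic hp.pos hC) p
  exact absurd hdvd (Nat.pow_succ_factorization_not_dvd (NeZero.ne n) hp)

/-- **Theorem 1.3.** Let `n` be a positive integer and `p` an odd prime. A connected circulant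
graph `Cay(Z_n, S)` of degree `p` admits a total perfect code iff `p ∣ n` and `s ≢ s' (mod p)`
for distinct `s, s' ∈ S`. -/
theorem circulant_totalPerfectCode_iff_of_degree_prime
    (n : ℕ) (hn : 0 < n) (p : ℕ) (hp : p.Prime) (hodd : Odd p)
    (S : Finset (ZMod n)) (h0S : (0 : ZMod n) ∉ S) (hSneg : ∀ s ∈ S, -s ∈ S)
    (hcard : S.card = p) (hconn : (circulantGraph n S).Connected) :
    (∃ C : Set (ZMod n), IsTotalPerfectCode (circulantGraph n S) C) ↔
      (p ∣ n ∧ ∀ s ∈ S, ∀ s' ∈ S, s ≠ s' → ¬ (s.val ≡ s'.val [MOD p])) := by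
  have : NeZero n := ⟨hn.ne'⟩
  have : NeZero p := ⟨hp.ne_zero⟩
  simp only [isTotalPerfectCode_circulantGraph_iff h0S hSneg]
  constructor
  · rintro ⟨C, hC⟩
    lift C to Finset (ZMod n) using C.toFinite
    have hpn : p ∣ n := ⟨#C, by rw [← hcard, hC.card_mul_card_eq, ZMod.card]⟩
    exact ⟨hpn, val_not_modEq_of_isComplement hp hodd hC hSneg hcard hpn
      (not_forall_castHom_eq_zero_of_connected hpn hp.one_lt hconn)⟩
  · rintro ⟨hpn, hS⟩
    refine ⟨_, isComplement_ker_castHom hpn (fun s hs s' hs' hss' => ?_) hcard⟩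
    by_contra hne
    exact hS s hs s' hs' hne ((val_modEq_iff_castHom_eq hpn s s').2 hss')
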